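/- Let T be a tree with γ_{rI}(T) = 2γ_r(T) and diameter at least 4, let x_0 x_1 ⋯ x_d be a diametral path chosen to maximize deg(x_{d-1}), and let D be a minimum restrained dominating set of T. Then x_{d-1} ∉ D and deg_T(x_{d-1}) = 2. -/

import Mathlib

open SimpleGraph Finset

variable {V : Type*} [Fintype V]

/-- D is a restrained dominating set of G. -/
def IsRDS (G : SimpleGraph V) (D : Set V) : Prop :=
  ∀ v, v ∉ D → (∃ u ∈ D, G.Adj v u) ∧ ∃ u, u ∉ D ∧ G.Adj v u

/-- The restrained domination number γ_r(G). -/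
noncomputable def rdn (G : SimpleGraph V) : ℕ :=
  sInf {n | ∃ D : Set V, IsRDS G D ∧ D.ncard = n}

open Classical in
/-- f is a restrained Italian dominating function on G. -/
def IsRIDF (G : SimpleGraph V) (f : V → ℕ) : Prop :=
  (∀ v, f v ≤ 2) ∧
  (∀ v, f v = 0 → 2 ≤ ∑ u ∈ Finset.univ.filter (fun u => G.Adj v u), f u) ∧
  (∀ v, f v = 0 → ∃ u, G.Adj v u ∧ f u = 0)

/-- The restrained Italian domination number γ_{rI}(G). -/
noncomputable def ridn (G : SimpleGraph V) : ℕ :=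
  sInf {n | ∃ f : V → ℕ, IsRIDF G f ∧ ∑ v, f v = n}

/-! Let `a = x_{d-1}` and `b = x_d`. Since the path is diametral and `T` is a tree, every
neighbour `w ≠ x_{d-2}` of `a` is a leaf hanging at `a`: otherwise replacing `b` by `w` and
walking one step further would give a path longer than the diameter. Let `S ∋ b` be the set of
these leaves, so `deg a = |S| + 1`. Leaves lie in every restrained dominating set, so `S ⊆ D`,
and lowering `2·𝟙_D` from `2` to `1` on `S` gives a restrained Italian dominating function of
weight `2|D| - |S|` as soon as `a ∈ D` or `|S| ≥ 2` (then `a` still collects weight `2` from `S`).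
As `γ_{rI}(T) = 2γ_r(T)`, neither can happen: `a ∉ D` and `|S| = 1`. -/

namespace SimpleGraph

variable {W : Type*} {G : SimpleGraph W}

lemma exists_walk_support_eq_ofFn : ∀ {n : ℕ} (y : Fin (n + 1) → W),
    (∀ i : Fin n, G.Adj (y i.castSucc) (y i.succ)) →
    ∃ p : G.Walk (y 0) (y (Fin.last n)), p.support = List.ofFn y
  | 0, y, _ => ⟨.nil, by simp⟩
  | n + 1, y, hy => by
    obtain ⟨p, hp⟩ := exists_walk_support_eq_ofFn (fun i => y i.succ) (fun i => hy i.succ)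
    exact ⟨.cons (by simpa using hy 0) p, by rw [Walk.support_cons, hp, List.ofFn_succ (f := y)]⟩

lemma exists_isPath_penultimate_eq {n : ℕ} (y : Fin (n + 1) → W) (hinj : Function.Injective y)
    (hy : ∀ i : Fin n, G.Adj (y i.castSucc) (y i.succ)) :
    ∃ p : G.Walk (y 0) (y (Fin.last n)),
      p.IsPath ∧ p.length = n ∧ p.penultimate = y ⟨n - 1, by omega⟩ := by
  obtain ⟨p, hsupp⟩ := exists_walk_support_eq_ofFn y hy
  have hlen : p.length = n := by
    have := p.length_support
    rw [hsupp, List.length_ofFn] at this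
    omega
  refine ⟨p, Walk.IsPath.mk' (hsupp ▸ List.nodup_ofFn.mpr hinj), hlen, ?_⟩
  rw [← Walk.support_getElem_length_sub_one_eq_penultimate]
  simp only [hsupp, hlen, List.getElem_ofFn]

lemma IsAcyclic.length_eq_dist (hG : G.IsAcyclic) {u v : W} {p : G.Walk u v} (hp : p.IsPath) :
    p.length = G.dist u v := by
  obtain ⟨q, hq, hlen⟩ := p.reachable.exists_path_of_dist
  obtain rfl : p = q := congrArg Subtype.val ((hG.subsingleton_path u v).elim ⟨p, hp⟩ ⟨q, hq⟩)
  exact hlen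

lemma IsAcyclic.eq_penultimate_of_adj_of_diam_le (hG : G.IsAcyclic) (hdiam : G.ediam ≠ ⊤)
    {u v w : W} {p : G.Walk u v} (hp : p.IsPath) (hlen : G.diam ≤ p.length)
    (hadj : G.Adj v w) : w = p.penultimate := by
  by_contra hne
  have hw : w ∉ p.support := fun hw => hne (hG.eq_penultimate_of_adj_end hp hadj hw)
  have hlen' := hG.length_eq_dist (hp.concat hw hadj)
  have := G.dist_le_diam hdiam (u := u) (v := w)
  rw [Walk.length_concat] at hlen'
  omega

lemma IsAcyclic.eq_penultimate_of_adj_of_adj_penultimate (hG : G.IsAcyclic)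
    (hdiam : G.ediam ≠ ⊤) {u v w x : W} {p : G.Walk u v} (hp : p.IsPath)
    (hlen : G.diam ≤ p.length) (hnil : ¬p.Nil) (hw : G.Adj p.penultimate w)
    (hwc : w ≠ p.dropLast.penultimate) (hx : G.Adj w x) : x = p.penultimate := by
  have hq := hp.dropLast
  have hwq : w ∉ p.dropLast.support := fun h => hwc (hG.eq_penultimate_of_adj_end hq hw h)
  have hlen' : G.diam ≤ (p.dropLast.concat hw).length := by
    rwa [Walk.length_concat, Walk.length_dropLast_add_one hnil]
  simpa only [Walk.penultimate_concat] using
    hG.eq_penultimate_of_adj_of_diam_le hdiam (hq.concat hwq hw) hlen' hx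

lemma IsAcyclic.exists_pendant_neighbors_penultimate [Fintype W] [DecidableRel G.Adj]
    (hG : G.IsAcyclic) (hdiam : G.ediam ≠ ⊤) {u v : W} {p : G.Walk u v} (hp : p.IsPath)
    (hlen : G.diam ≤ p.length) (h2 : 2 ≤ p.length) :
    ∃ S : Finset W, (∀ s ∈ S, G.Adj p.penultimate s ∧ ∀ x, G.Adj s x → x = p.penultimate) ∧
      S.Nonempty ∧ G.degree p.penultimate = #S + 1 := by
  classical
  have hnil : ¬p.Nil := by rw [← Walk.length_eq_zero_iff]; omega
  have hnil' : ¬p.dropLast.Nil := by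
    rw [← Walk.length_eq_zero_iff]
    have := Walk.length_dropLast_add_one hnil
    omega
  refine ⟨(G.neighborFinset p.penultimate).erase p.dropLast.penultimate, fun s hs => ?_, ⟨v, ?_⟩, ?_⟩
  · obtain ⟨hsc, hs⟩ := Finset.mem_erase.1 hs
    rw [mem_neighborFinset] at hs
    exact ⟨hs, fun x => hG.eq_penultimate_of_adj_of_adj_penultimate hdiam hp hlen hnil hs hsc⟩
  · have hv := (Walk.concat_isPath_iff (Walk.adj_penultimate hnil)).1
      (by rwa [Walk.concat_dropLast])
    have hc : p.dropLast.penultimate ∈ p.dropLast.support := p.dropLast.getVert_mem_support _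
    exact Finset.mem_erase.2 ⟨(ne_of_mem_of_not_mem hc hv.2).symm,
      (G.mem_neighborFinset _ _).2 (Walk.adj_penultimate hnil)⟩
  · rw [← card_neighborFinset_eq_degree, ← Finset.card_erase_add_one
      ((G.mem_neighborFinset _ _).2 (Walk.adj_penultimate hnil').symm)]

end SimpleGraph

section Domination

variable {W : Type*} {G : SimpleGraph W} {D : Set W}

lemma ridn_le_sum [Fintype W] {f : W → ℕ} (hf : IsRIDF G f) : ridn G ≤ ∑ v, f v :=
  Nat.sInf_le ⟨f, hf, rfl⟩

lemma IsRDS.mem_of_forall_adj_eq (hD : IsRDS G D) {v a : W} (hv : ∀ u, G.Adj v u → u = a) :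
    v ∈ D := by
  by_contra hvD
  obtain ⟨⟨u, huD, hu⟩, u', hu'D, hu'⟩ := hD v hvD
  exact hu'D (hv u' hu' ▸ hv u hu ▸ huD)

open Classical in
lemma IsRDS.isRIDF_of_pendant (hD : IsRDS G D) [Fintype W] {a : W} {S : Finset W}
    (hS : ∀ s ∈ S, G.Adj a s ∧ ∀ u, G.Adj s u → u = a) (ha : a ∈ D ∨ 2 ≤ #S) :
    IsRIDF G (fun v => if v ∈ D then if v ∈ S then 1 else 2 else 0) := by
  set f : W → ℕ := fun v => if v ∈ D then if v ∈ S then 1 else 2 else 0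
  have hf0 : ∀ v, f v = 0 ↔ v ∉ D := fun v => by simp only [f]; split_ifs <;> simp_all
  refine ⟨fun v => by simp only [f]; split_ifs <;> omega, fun v hv => ?_, fun v hv => ?_⟩
  · have hvD := (hf0 v).1 hv
    obtain ⟨⟨u, huD, hvu⟩, -⟩ := hD v hvD
    by_cases huS : u ∈ S
    · obtain rfl : v = a := (hS u huS).2 v hvu.symm
      have hS2 : 2 ≤ #S := ha.resolve_left hvD
      calc 2 ≤ ∑ s ∈ S, f s := by
            rw [Finset.sum_congr rfl fun s hs => show f s = 1 by
              simp [f, hs, hD.mem_of_forall_adj_eq (hS s hs).2]]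
            simpa using hS2
        _ ≤ _ := Finset.sum_le_sum_of_subset fun s hs => by simpa using (hS s hs).1
    · calc 2 = f u := by simp [f, huD, huS]
        _ ≤ _ := Finset.single_le_sum (fun _ _ => Nat.zero_le _) (by simpa using hvu)
  · obtain ⟨-, u, huD, hvu⟩ := hD v ((hf0 v).1 hv)
    exact ⟨u, hvu, (hf0 u).2 huD⟩

lemma IsRDS.ridn_add_card_le [Fintype W] (hD : IsRDS G D) {a : W} {S : Finset W}
    (hS : ∀ s ∈ S, G.Adj a s ∧ ∀ u, G.Adj s u → u = a) (ha : a ∈ D ∨ 2 ≤ #S) :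
    ridn G + #S ≤ 2 * D.ncard := by
  classical
  set f : W → ℕ := fun v => if v ∈ D then if v ∈ S then 1 else 2 else 0
  have hSD : ∀ s ∈ S, s ∈ D := fun s hs => hD.mem_of_forall_adj_eq (hS s hs).2
  have hsum : ∑ v, f v + #S = 2 * D.ncard :=
    calc ∑ v, f v + #S = ∑ v, (f v + if v ∈ S then 1 else 0) := by
          rw [Finset.sum_add_distrib, Finset.sum_boole]
          simp
      _ = ∑ v, if v ∈ D then 2 else 0 := Finset.sum_congr rfl fun v _ => by
          by_cases hv : v ∈ S
          · simp [f, hv, hSD v hv]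
          · simp [f, hv]
      _ = 2 * D.ncard := by
          rw [Finset.sum_ite, Finset.sum_const_zero, Finset.sum_const, smul_eq_mul, mul_comm,
            Set.ncard_eq_toFinset_card']
          simp
  exact hsum ▸ Nat.add_le_add_right (ridn_le_sum (hD.isRIDF_of_pendant hS ha)) _

end Domination

/-- Let T be a tree with γ_{rI}(T) = 2 γ_r(T) and diameter d ≥ 4, let x₀x₁⋯x_d be a
diametral path chosen among all diametral paths to maximize the degree of x_{d-1}, and
let D be a minimum restrained dominating set. Then x_{d-1} ∉ D and deg(x_{d-1}) = 2. -/
theorem diametral_path_property (G : SimpleGraph V) [DecidableRel G.Adj] (hT : G.IsTree)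
    (d : ℕ) (hd : d = G.diam) (hd4 : 4 ≤ d)
    (x : Fin (d + 1) → V) (hinj : Function.Injective x)
    (hadj : ∀ i : Fin d, G.Adj (x i.castSucc) (x i.succ))
    (hcond : ridn G = 2 * rdn G)
    (D : Set V) (hD : IsRDS G D) (hDcard : D.ncard = rdn G) :
    x ⟨d - 1, by omega⟩ ∉ D ∧ G.degree (x ⟨d - 1, by omega⟩) = 2 := by
  obtain ⟨p, hp, hlen, hpen⟩ := exists_isPath_penultimate_eq x hinj hadj
  rw [← hpen]
  obtain ⟨S, hS, hSne, hdeg⟩ := hT.isAcyclic.exists_pendant_neighbors_penultimate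
    (G.ediam_ne_top_of_diam_ne_zero (by omega)) hp (by omega) (by omega)
  have hSpos := hSne.card_pos
  have hsmall : ¬(p.penultimate ∈ D ∨ 2 ≤ #S) := fun h => by
    have := hD.ridn_add_card_le hS h
    omega
  obtain ⟨haD, hS2⟩ := not_or.1 hsmall
  exact ⟨haD, by omega⟩
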